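/- Let n ≥ 1, let P be an invertible real n×n matrix, let f, y ∈ ℝⁿ, σ² > 0 and λ > 0. Set ỹ := y − P⁻¹ f. Then the supremum over x ∈ ℝⁿ of the penalized log-likelihood l(x) := −(1/(2σ²))‖y − x‖² − (λ/2)‖P x − f‖² is attained and equals −(1/(2σ²)) ⟨ỹ, (I − (I + σ²λ Pᵀ P)⁻¹) ỹ⟩. -/

import Mathlib

/-!
With `z := x - P⁻¹ f` one has `y - x = ỹ - z` and `P x - f = P z`, so `-2σ² l(x)` is the
ridge objective `‖ỹ - z‖² + σ²λ ‖P z‖² = zᵀ A z - 2 zᵀ ỹ + ỹᵀ ỹ` with `A := I + σ²λ Pᵀ P`.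
Completing the square turns it into `(z - A⁻¹ ỹ)ᵀ A (z - A⁻¹ ỹ) + ỹᵀ (I - A⁻¹) ỹ`, and `A` is
positive definite, so the maximum is attained exactly at `z = A⁻¹ ỹ`.
-/

open Matrix

namespace Matrix

variable {ι R : Type*} [Fintype ι] [DecidableEq ι] [CommRing R]

theorem IsSymm.sub_inv_mulVec_dotProduct_mulVec_sub_inv_mulVec {A : Matrix ι ι R}
    (hA : A.IsSymm) (hdet : IsUnit A.det) (z b : ι → R) :
    (z - A⁻¹ *ᵥ b) ⬝ᵥ A *ᵥ (z - A⁻¹ *ᵥ b) = z ⬝ᵥ A *ᵥ z - 2 * (z ⬝ᵥ b) + b ⬝ᵥ A⁻¹ *ᵥ b := by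
  have hAAinv : A *ᵥ (A⁻¹ *ᵥ b) = b := by
    rw [mulVec_mulVec, mul_nonsing_inv A hdet, one_mulVec]
  have hcross : A⁻¹ *ᵥ b ⬝ᵥ A *ᵥ z = z ⬝ᵥ b := by
    rw [← dotProduct_transpose_mulVec, hA.eq, hAAinv]
  rw [mulVec_sub, hAAinv, sub_dotProduct, dotProduct_sub, dotProduct_sub, hcross,
    dotProduct_comm (A⁻¹ *ᵥ b)]
  ring

theorem sub_dotProduct_sub_add_mul_mulVec_dotProduct_mulVec (P : Matrix ι ι R) (c : R)
    (v z : ι → R) :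
    (v - z) ⬝ᵥ (v - z) + c * (P *ᵥ z ⬝ᵥ P *ᵥ z)
      = z ⬝ᵥ (1 + c • (Pᵀ * P)) *ᵥ z - 2 * (z ⬝ᵥ v) + v ⬝ᵥ v := by
  rw [add_mulVec, one_mulVec, smul_mulVec, ← mulVec_mulVec, dotProduct_add, dotProduct_smul,
    smul_eq_mul, dotProduct_transpose_mulVec, sub_dotProduct, dotProduct_sub, dotProduct_sub,
    dotProduct_comm v z]
  ring

theorem sub_dotProduct_sub_add_mul_mulVec_dotProduct_mulVec_of_isUnit (P : Matrix ι ι R)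
    {c : R} {A : Matrix ι ι R} (hA : A = 1 + c • (Pᵀ * P)) (hdet : IsUnit A.det)
    (v z : ι → R) :
    (v - z) ⬝ᵥ (v - z) + c * (P *ᵥ z ⬝ᵥ P *ᵥ z)
      = (z - A⁻¹ *ᵥ v) ⬝ᵥ A *ᵥ (z - A⁻¹ *ᵥ v) + v ⬝ᵥ (1 - A⁻¹) *ᵥ v := by
  have hsymm : A.IsSymm := hA ▸ isSymm_one.add ((isSymm_transpose_mul_self P).smul c)
  rw [hsymm.sub_inv_mulVec_dotProduct_mulVec_sub_inv_mulVec hdet, hA,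
    sub_dotProduct_sub_add_mul_mulVec_dotProduct_mulVec, ← hA, sub_mulVec, one_mulVec,
    dotProduct_sub]
  ring

theorem posDef_one_add_smul_transpose_mul_self (P : Matrix ι ι ℝ) {c : ℝ} (hc : 0 ≤ c) :
    (1 + c • (Pᵀ * P)).PosDef := by
  have hPtP := (posSemidef_conjTranspose_mul_self P).smul hc
  rw [conjTranspose_eq_transpose_of_trivial] at hPtP
  exact PosDef.one.add_posSemidef hPtP

end Matrix

theorem profiled_penalized_likelihood_single_equation_general
    {n : ℕ} (P : Matrix (Fin n) (Fin n) ℝ) (hP : IsUnit P)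
    (f y : Fin n → ℝ) (σ2 lam : ℝ) (hσ2 : 0 < σ2) (hlam : 0 < lam)
    (ytil : Fin n → ℝ) (hy : ytil = y - P⁻¹.mulVec f)
    (l : (Fin n → ℝ) → ℝ)
    (hl : ∀ x, l x = -(1 / (2 * σ2)) * ((y - x) ⬝ᵥ (y - x))
          - (lam / 2) * ((P.mulVec x - f) ⬝ᵥ (P.mulVec x - f))) :
    IsGreatest (Set.range l)
      (-(1 / (2 * σ2)) *
        (ytil ⬝ᵥ (((1 : Matrix (Fin n) (Fin n) ℝ)
            - ((1 : Matrix (Fin n) (Fin n) ℝ) + (σ2 * lam) • (Pᵀ * P))⁻¹).mulVec ytil))) := by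
  set A : Matrix (Fin n) (Fin n) ℝ := 1 + (σ2 * lam) • (Pᵀ * P) with hA_def
  have hA : A.PosDef := posDef_one_add_smul_transpose_mul_self P (mul_pos hσ2 hlam).le
  set x₀ := P⁻¹ *ᵥ f + A⁻¹ *ᵥ ytil
  have hl_sq : ∀ x, l x = -(1 / (2 * σ2)) *
      ((x - x₀) ⬝ᵥ A *ᵥ (x - x₀) + ytil ⬝ᵥ (1 - A⁻¹) *ᵥ ytil) := by
    intro x
    have hres : y - x = ytil - (x - P⁻¹ *ᵥ f) := by rw [hy]; abel
    have hfit : P *ᵥ x - f = P *ᵥ (x - P⁻¹ *ᵥ f) := by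
      rw [mulVec_sub, mulVec_mulVec, mul_nonsing_inv P ((isUnit_iff_isUnit_det P).mp hP),
        one_mulVec]
    rw [hl, hres, hfit, sub_add_eq_sub_sub,
      ← sub_dotProduct_sub_add_mul_mulVec_dotProduct_mulVec_of_isUnit P hA_def
        ((isUnit_iff_isUnit_det A).mp hA.isUnit)]
    field_simp
    ring
  refine ⟨⟨x₀, by simp [hl_sq]⟩, ?_⟩
  rintro _ ⟨x, rfl⟩
  have hq : 0 ≤ (x - x₀) ⬝ᵥ A *ᵥ (x - x₀) := by
    simpa only [star_trivial] using hA.posSemidef.dotProduct_mulVec_nonneg (x - x₀)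
  rw [hl_sq]
  exact mul_le_mul_of_nonpos_left (le_add_of_nonneg_left hq)
    (by simp only [neg_nonpos]; positivity)

/-- Let `P` be an invertible real `n × n` matrix (`n ≥ 1`), `f, y ∈ ℝⁿ`,
`σ² > 0`, `λ > 0`. Set `ỹ := y − P⁻¹ f`. Then the supremum over `x ∈ ℝⁿ` of
`l(x) := −(1/(2σ²))‖y − x‖² − (λ/2)‖P x − f‖²` is attained and equals
`−(1/(2σ²)) ⟨ỹ, (I − (I + σ²λ Pᵀ P)⁻¹) ỹ⟩`. -/
theorem profiled_penalized_likelihood_single_equation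
    {n : ℕ} (hn : 1 ≤ n) (P : Matrix (Fin n) (Fin n) ℝ) (hP : IsUnit P)
    (f y : Fin n → ℝ) (σ2 lam : ℝ) (hσ2 : 0 < σ2) (hlam : 0 < lam)
    (ytil : Fin n → ℝ) (hy : ytil = y - P⁻¹.mulVec f)
    (l : (Fin n → ℝ) → ℝ)
    (hl : ∀ x, l x = -(1 / (2 * σ2)) * ((y - x) ⬝ᵥ (y - x))
          - (lam / 2) * ((P.mulVec x - f) ⬝ᵥ (P.mulVec x - f))) :
    IsGreatest (Set.range l)
      (-(1 / (2 * σ2)) *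
        (ytil ⬝ᵥ (((1 : Matrix (Fin n) (Fin n) ℝ)
            - ((1 : Matrix (Fin n) (Fin n) ℝ) + (σ2 * lam) • (Pᵀ * P))⁻¹).mulVec ytil))) :=
  profiled_penalized_likelihood_single_equation_general P hP f y σ2 lam hσ2 hlam ytil hy l hl
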